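/- Let S be a commutative congruence-simple semiring with a multiplicatively absorbing element w such that x² ≠ w for every x ∈ S with x ≠ w. Then exactly one of the following three cases holds: (1) S is isomorphic to the two-element semiring 𝕋₄ or to 𝕋₈; (2) S is a field; (3) S is isomorphic to V(G) for some commutative group G. -/

import Mathlib

universe u

/-- A semiring in the sense of the paper: a (nonempty) set with an associative
commutative addition and an associative multiplication distributing over
addition from both sides.  No additive or multiplicative identity is assumed. -/
class PaperSemiring (S : Type*) extends Add S, Mul S where
  add_assoc : ∀ a b c : S, a + b + c = a + (b + c)
  add_comm : ∀ a b : S, a + b = b + a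
  mul_assoc : ∀ a b c : S, a * b * c = a * (b * c)
  left_distrib : ∀ a b c : S, a * (b + c) = a * b + a * c
  right_distrib : ∀ a b c : S, (a + b) * c = a * c + b * c

/-- `nfoldAdd n x` is the `n`-fold sum `x + ⋯ + x` (only meaningful for `n ≥ 1`;
we set `nfoldAdd 0 x = x` as a junk value). -/
def nfoldAdd {S : Type*} [Add S] : ℕ → S → S
  | 0, x => x
  | 1, x => x
  | n + 2, x => nfoldAdd (n + 1) x + x

/-- `nfoldMul n x` is the `n`-fold product `x * ⋯ * x` (only meaningful for `n ≥ 1`;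
we set `nfoldMul 0 x = x` as a junk value). -/
def nfoldMul {S : Type*} [Mul S] : ℕ → S → S
  | 0, x => x
  | 1, x => x
  | n + 2, x => nfoldMul (n + 1) x * x

/-- `w` is multiplicatively absorbing. -/
def MulAbsorbing {S : Type*} [Mul S] (w : S) : Prop :=
  ∀ x : S, x * w = w ∧ w * x = w

/-- `w` is a zero element: multiplicatively absorbing and additively neutral. -/
def IsZeroElem {S : Type*} [Add S] [Mul S] (w : S) : Prop :=
  MulAbsorbing w ∧ ∀ x : S, x + w = x

/-- `w` is bi-absorbing: multiplicatively and additively absorbing. -/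
def BiAbsorbing {S : Type*} [Add S] [Mul S] (w : S) : Prop :=
  MulAbsorbing w ∧ ∀ x : S, x + w = w

/-- `I` is an ideal: nonempty, `I+I ⊆ I`, `S·I ⊆ I`, `I·S ⊆ I`. -/
def IsIdealSet {S : Type*} [Add S] [Mul S] (I : Set S) : Prop :=
  I.Nonempty ∧ (∀ a ∈ I, ∀ b ∈ I, a + b ∈ I) ∧
    ∀ s : S, ∀ a ∈ I, s * a ∈ I ∧ a * s ∈ I

/-- `I` is a bi-ideal: nonempty, `S+I ⊆ I`, `S·I ⊆ I`, `I·S ⊆ I`. -/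
def IsBiIdealSet {S : Type*} [Add S] [Mul S] (I : Set S) : Prop :=
  I.Nonempty ∧ (∀ s : S, ∀ a ∈ I, s + a ∈ I) ∧
    ∀ s : S, ∀ a ∈ I, s * a ∈ I ∧ a * s ∈ I

/-- The relation `α_I`:  `(x,y) ∈ α_I` iff `x + a = y + b` for some `a, b ∈ I`. -/
def alphaRel {S : Type*} [Add S] (I : Set S) (x y : S) : Prop :=
  ∃ a ∈ I, ∃ b ∈ I, x + a = y + b

/-- The relation `β_J = (J×J) ∪ id`. -/
def betaRel {S : Type*} (J : Set S) (x y : S) : Prop :=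
  (x ∈ J ∧ y ∈ J) ∨ x = y

/-- The relation `γ_n`: `(x,y) ∈ γ_n` iff `n·x = n·y`. -/
def gammaRel {S : Type*} [Add S] (n : ℕ) (x y : S) : Prop :=
  nfoldAdd n x = nfoldAdd n y

/-- The relation `δ`: `(x,y) ∈ δ` iff `2^i·x = y + u` and `2^i·y = x + v` for
some `i ≥ 0` and `u, v ∈ S`. -/
def deltaRel {S : Type*} [Add S] (x y : S) : Prop :=
  ∃ (i : ℕ) (u v : S), nfoldAdd (2 ^ i) x = y + u ∧ nfoldAdd (2 ^ i) y = x + v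

/-- A congruence: an equivalence relation compatible with both operations. -/
def IsCongruence {S : Type*} [Add S] [Mul S] (r : S → S → Prop) : Prop :=
  Equivalence r ∧ (∀ x x' y y' : S, r x x' → r y y' → r (x + y) (x' + y')) ∧
    ∀ x x' y y' : S, r x x' → r y y' → r (x * y) (x' * y')

/-- `S` is congruence-simple: it has just two congruences (the identity relation
and the full relation, which are distinct). -/
def CongSimple (S : Type*) [Add S] [Mul S] : Prop :=
  (∃ x y : S, x ≠ y) ∧
    ∀ r : S → S → Prop, IsCongruence r → (∀ x y, r x y ↔ x = y) ∨ ∀ x y, r x y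

/-- The two-element semiring `𝕋₄`. -/
inductive T4 : Type where | a | b

instance : Add T4 := ⟨fun x y => match x, y with | .a, .a => .a | _, _ => .b⟩
instance : Mul T4 := ⟨fun x y => match x, y with | .b, .b => .b | _, _ => .a⟩

/-- The two-element semiring `𝕋₈`. -/
inductive T8 : Type where | a | b

instance : Add T8 := ⟨fun _ _ => .a⟩
instance : Mul T8 := ⟨fun x y => match x, y with | .b, .b => .b | _, _ => .a⟩

/-- Isomorphism of semirings (as sets with two binary operations). -/
def SIso (S T : Type*) [Add S] [Mul S] [Add T] [Mul T] : Prop :=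
  ∃ f : S ≃ T, (∀ x y : S, f (x + y) = f x + f y) ∧ ∀ x y : S, f (x * y) = f x * f y

/-- Addition of the semiring `V(G)` on `Option G` (`none` plays the role of `o`):
`x + x = x` and `x + y = o` for `x ≠ y`. -/
noncomputable def vAdd {G : Type*} (x y : Option G) : Option G :=
  haveI := Classical.decEq (Option G)
  if x = y then x else none

/-- Multiplication of the semiring `V(G)` on `Option G`: it extends the one of `G`,
and `o` is multiplicatively absorbing. -/
def vMul {G : Type*} [Mul G] : Option G → Option G → Option G
  | some x, some y => some (x * y)
  | _, _ => none

/-- Case (1): `S` is isomorphic to `𝕋₄` or to `𝕋₈`. -/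
def CaseTwoElem (S : Type*) [Add S] [Mul S] : Prop :=
  SIso S T4 ∨ SIso S T8

/-- `S` (with its semiring operations) is a field: there are a neutral element
`z` for addition and a neutral element `e ≠ z` for multiplication, additive
inverses exist, multiplication is commutative and every element `≠ z` has a
multiplicative inverse. -/
def FieldOps (S : Type*) [Add S] [Mul S] : Prop :=
  ∃ z e : S, z ≠ e ∧ (∀ x : S, x + z = x) ∧ (∀ x : S, ∃ y : S, x + y = z) ∧
    (∀ x : S, x * e = x ∧ e * x = x) ∧ (∀ x y : S, x * y = y * x) ∧
    ∀ x : S, x ≠ z → ∃ y : S, x * y = e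

/-- `I` is a (two-sided) ideal of the ring `S` with zero `z`. -/
def RingIdealSet {S : Type*} [Add S] [Mul S] (z : S) (I : Set S) : Prop :=
  z ∈ I ∧ (∀ a ∈ I, ∀ b ∈ I, a + b ∈ I) ∧ (∀ a ∈ I, ∃ b ∈ I, a + b = z) ∧
    ∀ s : S, ∀ a ∈ I, s * a ∈ I ∧ a * s ∈ I

/-- `S` is a simple ring without zero-divisors: `(S,+)` is an abelian group
with neutral element `z`, the only two-sided ideals are `{z}` and `S`, and
`a·b ≠ z` whenever `a ≠ z` and `b ≠ z`. -/
def SimpleRingNoZeroDiv (S : Type*) [Add S] [Mul S] : Prop :=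
  ∃ z : S, (∀ x : S, x + z = x) ∧ (∀ x : S, ∃ y : S, x + y = z) ∧
    (∀ I : Set S, RingIdealSet z I → I = {z} ∨ I = Set.univ) ∧
    ∀ a b : S, a ≠ z → b ≠ z → a * b ≠ z

/-- `S` is isomorphic to the semiring `V(G)` (realized on `Option G`, with
`none` playing the role of the bi-absorbing element `o`). -/
def IsoToV (S : Type u) [Add S] [Mul S] : Prop :=
  ∃ (G : Type u) (_ : CommGroup G) (f : S ≃ Option G),
    (∀ x y : S, f (x + y) = vAdd (f x) (f y)) ∧
      ∀ x y : S, f (x * y) = vMul (f x) (f y)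

/- ================= Auxiliary development ================= -/

section Aux

variable {S : Type u} [PaperSemiring S]

instance (priority := 100) : AddCommSemigroup S :=
  { add_assoc := PaperSemiring.add_assoc, add_comm := PaperSemiring.add_comm }

instance (priority := 100) : Semigroup S :=
  { mul_assoc := PaperSemiring.mul_assoc }

instance (priority := 100) : Distrib S :=
  { left_distrib := PaperSemiring.left_distrib,
    right_distrib := PaperSemiring.right_distrib }

private lemma exists_ne' (hs : CongSimple S) (x : S) : ∃ y : S, y ≠ x := by
  obtain ⟨u, v, huv⟩ := hs.1
  by_cases h : x = u
  · exact ⟨v, fun hv => huv (by rw [← h, hv])⟩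
  · exact ⟨u, fun hu => h hu.symm⟩

private lemma simple_cases (hs : CongSimple S) {r : S → S → Prop} (hr : IsCongruence r) :
    (∀ x y : S, r x y ↔ x = y) ∨ ∀ x y : S, r x y := hs.2 r hr

/-- multiplication by a non-absorbing element is injective -/
private lemma mul_cancel_left (hcomm : ∀ x y : S, x * y = y * x) (hs : CongSimple S)
    {w : S} (hw : MulAbsorbing w) (hnil : ∀ x : S, x ≠ w → x * x ≠ w)
    {z : S} (hz : z ≠ w) : ∀ x y : S, z * x = z * y → x = y := by
  have hr : IsCongruence (fun a b : S => z * a = z * b) := by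
    refine ⟨⟨fun _ => rfl, fun h => h.symm, fun h h' => h.trans h'⟩, ?_, ?_⟩
    · intro x x' y y' h h'
      simp only [mul_add, h, h']
    · intro x x' y y' h h'
      show z * (x * y) = z * (x' * y')
      calc z * (x * y) = (z * x) * y := (mul_assoc _ _ _).symm
        _ = (z * x') * y := by rw [h]
        _ = x' * (z * y) := by rw [hcomm z x', mul_assoc]
        _ = x' * (z * y') := by rw [h']
        _ = z * (x' * y') := by rw [← mul_assoc, hcomm x' z, mul_assoc]
  rcases simple_cases hs hr with hid | hfull
  · exact fun x y h => (hid x y).1 h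
  · exfalso
    have h := hfull z w
    rw [(hw z).1] at h
    exact hnil z hz h

/-- no zero divisors -/
private lemma nzd (hcomm : ∀ x y : S, x * y = y * x) (hs : CongSimple S)
    {w : S} (hw : MulAbsorbing w) (hnil : ∀ x : S, x ≠ w → x * x ≠ w)
    {x y : S} (h : x * y = w) : x = w ∨ y = w := by
  by_cases hx : x = w
  · exact Or.inl hx
  · refine Or.inr (mul_cancel_left hcomm hs hw hnil hx y w ?_)
    rw [h, (hw x).1]

private lemma nzd' (hcomm : ∀ x y : S, x * y = y * x) (hs : CongSimple S)
    {w : S} (hw : MulAbsorbing w) (hnil : ∀ x : S, x ≠ w → x * x ≠ w)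
    {x y : S} (hx : x ≠ w) (hy : y ≠ w) : x * y ≠ w := fun h =>
  (nzd hcomm hs hw hnil h).elim hx hy

/-- every bi-ideal is a singleton or everything -/
private lemma biideal_cases (hs : CongSimple S) {J : Set S} (hJ : IsBiIdealSet J) :
    (∀ a ∈ J, ∀ b ∈ J, a = b) ∨ J = Set.univ := by
  obtain ⟨hne, hadd, hmul⟩ := hJ
  have hr : IsCongruence (betaRel J) := by
    refine ⟨⟨fun _ => Or.inr rfl, ?_, ?_⟩, ?_, ?_⟩
    · rintro x y (⟨h1, h2⟩ | rfl)
      · exact Or.inl ⟨h2, h1⟩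
      · exact Or.inr rfl
    · rintro x y z (⟨h1, h2⟩ | rfl) (⟨h3, h4⟩ | rfl)
      · exact Or.inl ⟨h1, h4⟩
      · exact Or.inl ⟨h1, h2⟩
      · exact Or.inl ⟨h3, h4⟩
      · exact Or.inr rfl
    · rintro x x' y y' (⟨h1, h2⟩ | rfl) (⟨h3, h4⟩ | rfl)
      · exact Or.inl ⟨hadd x y h3, hadd x' y' h4⟩
      · exact Or.inl ⟨by rw [add_comm]; exact hadd y x h1,
          by rw [add_comm]; exact hadd y x' h2⟩
      · exact Or.inl ⟨hadd x y h3, hadd x y' h4⟩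
      · exact Or.inr rfl
    · rintro x x' y y' (⟨h1, h2⟩ | rfl) (⟨h3, h4⟩ | rfl)
      · exact Or.inl ⟨(hmul x y h3).1, (hmul x' y' h4).1⟩
      · exact Or.inl ⟨(hmul y x h1).2, (hmul y x' h2).2⟩
      · exact Or.inl ⟨(hmul x y h3).1, (hmul x y' h4).1⟩
      · exact Or.inr rfl
  rcases simple_cases hs hr with hid | hfull
  · exact Or.inl fun a ha b hb => (hid a b).1 (Or.inl ⟨ha, hb⟩)
  · refine Or.inr (Set.eq_univ_of_forall fun x => ?_)
    obtain ⟨y, hy⟩ := exists_ne' hs x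
    rcases hfull x y with ⟨h1, _⟩ | h
    · exact h1
    · exact absurd h.symm hy

/-- α_I is a congruence for any ideal I -/
private lemma alpha_congruence (hcomm : ∀ x y : S, x * y = y * x)
    {I : Set S} (hI : IsIdealSet I) : IsCongruence (alphaRel I) := by
  obtain ⟨⟨i0, hi0⟩, hadd, hmul⟩ := hI
  refine ⟨⟨fun x => ⟨i0, hi0, i0, hi0, rfl⟩, ?_, ?_⟩, ?_, ?_⟩
  · rintro x y ⟨a, ha, b, hb, h⟩; exact ⟨b, hb, a, ha, h.symm⟩
  · rintro x y z ⟨a, ha, b, hb, h⟩ ⟨c, hc, d, hd, h'⟩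
    refine ⟨a + c, hadd a ha c hc, d + b, hadd d hd b hb, ?_⟩
    calc x + (a + c) = (x + a) + c := by ac_rfl
      _ = (y + b) + c := by rw [h]
      _ = (y + c) + b := by ac_rfl
      _ = (z + d) + b := by rw [h']
      _ = z + (d + b) := by ac_rfl
  · rintro x x' y y' ⟨a, ha, b, hb, h⟩ ⟨c, hc, d, hd, h'⟩
    refine ⟨a + c, hadd a ha c hc, b + d, hadd b hb d hd, ?_⟩
    calc x + y + (a + c) = (x + a) + (y + c) := by ac_rfl
      _ = (x' + b) + (y' + d) := by rw [h, h']
      _ = x' + y' + (b + d) := by ac_rfl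
  · rintro x x' y y' ⟨a, ha, b, hb, h⟩ ⟨c, hc, d, hd, h'⟩
    have key : (x + a) * (y + c) = (x' + b) * (y' + d) := by rw [h, h']
    have e1 : (x + a) * (y + c) = x * y + (x * c + (a * y + a * c)) := by
      rw [left_distrib, right_distrib, right_distrib]; ac_rfl
    have e2 : (x' + b) * (y' + d) = x' * y' + (x' * d + (b * y' + b * d)) := by
      rw [left_distrib, right_distrib, right_distrib]; ac_rfl
    have m1 : x * c + (a * y + a * c) ∈ I := by
      refine hadd _ (hmul x c hc).1 _ (hadd _ (hmul y a ha).2 _ (hmul c a ha).2)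
    have m2 : x' * d + (b * y' + b * d) ∈ I := by
      refine hadd _ (hmul x' d hd).1 _ (hadd _ (hmul y' b hb).2 _ (hmul d b hb).2)
    exact ⟨_, m1, _, m2, by rw [← e1, ← e2, key]⟩

/-- Trichotomy: `w` is additively absorbing or additively neutral -/
private lemma tri1 (hcomm : ∀ x y : S, x * y = y * x) (hs : CongSimple S)
    {w : S} (hw : MulAbsorbing w) :
    (∀ x : S, x + w = w) ∨ (∀ x : S, x + w = x) := by
  -- helper : if x + w is constant, then w is additively absorbing
  have hconst : (∀ x : S, x + w = w + w) → ∀ x : S, x + w = w := by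
    intro hc
    have hww : w + w = w := by
      have h1 : (w + w) * w = w := (hw (w + w)).1
      have h2 : (w + w) * w = w + w := by
        rw [right_distrib, (hw w).1]
      rw [← h2, h1]
    intro x; rw [hc x, hww]
  -- the bi-ideal S + w
  have hJ : IsBiIdealSet {x : S | ∃ s : S, s + w = x} := by
    refine ⟨⟨w + w, w, rfl⟩, ?_, ?_⟩
    · rintro s a ⟨t, rfl⟩
      exact ⟨s + t, (add_assoc s t w).symm ▸ rfl⟩
    · rintro s a ⟨t, rfl⟩
      constructor
      · refine ⟨s * t, ?_⟩
        calc s * t + w = s * t + s * w := by rw [(hw s).1]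
          _ = s * (t + w) := (left_distrib s t w).symm
      · refine ⟨t * s, ?_⟩
        calc t * s + w = t * s + w * s := by rw [(hw s).2]
          _ = (t + w) * s := (right_distrib t w s).symm
  rcases biideal_cases hs hJ with hsing | huniv
  · -- x + w constant
    left
    exact hconst fun x => hsing _ ⟨x, rfl⟩ _ ⟨w, rfl⟩
  · -- μ : x ~ y iff x + w = y + w
    have hmu : IsCongruence (fun x y : S => x + w = y + w) := by
      have step : ∀ x y : S, x + w = y + w → ∀ t : S, x * t + w = y * t + w := by
        intro x y h t
        have : (x + w) * t = (y + w) * t := by rw [h]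
        rwa [right_distrib, right_distrib, (hw t).2] at this
      refine ⟨⟨fun _ => rfl, fun h => h.symm, fun h h' => h.trans h'⟩, ?_, ?_⟩
      · intro x x' y y' h h'
        calc x + y + w = x + (y + w) := by ac_rfl
          _ = x + (y' + w) := by rw [h']
          _ = (x + w) + y' := by ac_rfl
          _ = (x' + w) + y' := by rw [h]
          _ = x' + y' + w := by ac_rfl
      · intro x x' y y' h h'
        calc x * y + w = x' * y + w := step x x' h y
          _ = y * x' + w := by rw [hcomm]
          _ = y' * x' + w := step y y' h' x'
          _ = x' * y' + w := by rw [hcomm]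
    rcases simple_cases hs hmu with hid | hfull
    · -- w + t = w for some t, giving a neutral element t; then w is a zero
      right
      have hwJ : ∃ t : S, t + w = w := by
        have : w ∈ {x : S | ∃ s : S, s + w = x} := huniv ▸ Set.mem_univ w
        exact this
      obtain ⟨t, ht⟩ := hwJ
      have hneut : ∀ x : S, x + t = x := by
        intro x
        apply (hid (x + t) x).1
        show x + t + w = x + w
        rw [add_assoc, ht]
      have hww : w + w = w := by
        have h1 : w * (t + t) = w * t + w * t := left_distrib w t t
        rw [hneut t, (hw t).2] at h1
        exact h1.symm
      -- the ideal I' = {x | x + w = w}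
      have hI' : IsIdealSet {x : S | x + w = w} := by
        refine ⟨⟨t, ht⟩, ?_, ?_⟩
        · intro a ha b hb
          show a + b + w = w
          rw [add_assoc, hb, ha]
        · intro s a ha
          constructor
          · show s * a + w = w
            calc s * a + w = s * a + s * w := by rw [(hw s).1]
              _ = s * (a + w) := (left_distrib s a w).symm
              _ = s * w := by rw [ha]
              _ = w := (hw s).1
          · show a * s + w = w
            calc a * s + w = a * s + w * s := by rw [(hw s).2]
              _ = (a + w) * s := (right_distrib a w s).symm
              _ = w * s := by rw [ha]
              _ = w := (hw s).2
      rcases simple_cases hs (alpha_congruence hcomm hI') with hid' | hfull'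
      · intro x
        symm
        apply (hid' x (x + w)).1
        refine ⟨w, hww, w, hww, ?_⟩
        rw [add_assoc, hww]
      · -- impossible: everything would be equal
        exfalso
        obtain ⟨u, v, huv⟩ := hs.1
        obtain ⟨a, ha, b, hb, h⟩ := hfull' u v
        have hna : ∀ x : S, x + a = x := fun x => (hid (x + a) x).1 (by
          show x + a + w = x + w
          rw [add_assoc, ha])
        have hnb : ∀ x : S, x + b = x := fun x => (hid (x + b) x).1 (by
          show x + b + w = x + w
          rw [add_assoc, hb])
        rw [hna, hnb] at h
        exact huv h
    · left
      exact hconst fun x => hfull x w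
end Aux

section Aux2

variable {S : Type u} [PaperSemiring S]

private lemma nfold_one (x : S) : nfoldAdd 1 x = x := rfl

private lemma nfold_two (x : S) : nfoldAdd 2 x = x + x := rfl

private lemma nfold_step (n : ℕ) (x : S) :
    nfoldAdd (n + 2) x = nfoldAdd (n + 1) x + x := rfl

private lemma nfold_add (m n : ℕ) (x : S) :
    nfoldAdd (m + 1 + (n + 1)) x = nfoldAdd (m + 1) x + nfoldAdd (n + 1) x := by
  induction n with
  | zero => rfl
  | succ n ih =>
    have h1 : m + 1 + (n + 1 + 1) = (m + 1 + (n + 1)) + 1 := by omega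
    have h2 : m + 1 + (n + 1) = m + n + 1 + 1 := by omega
    rw [h1, h2]
    show nfoldAdd (m + n + 1 + 2) x = _
    rw [nfold_step]
    rw [← h2, ih, nfold_step, add_assoc]

private lemma nfold_distrib (n : ℕ) (x y : S) :
    nfoldAdd (n + 1) (x + y) = nfoldAdd (n + 1) x + nfoldAdd (n + 1) y := by
  induction n with
  | zero => rfl
  | succ n ih =>
    show nfoldAdd (n + 2) (x + y) = _
    rw [nfold_step, ih, nfold_step, nfold_step]
    ac_rfl

private lemma nfold_mul_right (n : ℕ) (x t : S) :
    nfoldAdd (n + 1) x * t = nfoldAdd (n + 1) (x * t) := by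
  induction n with
  | zero => rfl
  | succ n ih =>
    show nfoldAdd (n + 1 + 1) x * t = nfoldAdd (n + 1 + 1) (x * t)
    rw [nfold_step, nfold_step, right_distrib, ih]

private lemma nfold_mul_left (n : ℕ) (x t : S) :
    t * nfoldAdd (n + 1) x = nfoldAdd (n + 1) (t * x) := by
  induction n with
  | zero => rfl
  | succ n ih =>
    show t * nfoldAdd (n + 1 + 1) x = nfoldAdd (n + 1 + 1) (t * x)
    rw [nfold_step, nfold_step, left_distrib, ih]

private lemma nfold_comp (m n : ℕ) (x : S) :
    nfoldAdd ((m + 1) * (n + 1)) x = nfoldAdd (m + 1) (nfoldAdd (n + 1) x) := by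
  induction m with
  | zero => rw [Nat.one_mul]; rfl
  | succ m ih =>
    have h1 : (m + 1 + 1) * (n + 1) = (m + 1) * (n + 1) + (n + 1) := by ring
    have h2 : ∃ k, (m + 1) * (n + 1) = k + 1 := ⟨(m + 1) * (n + 1) - 1, by
      have : 1 ≤ (m + 1) * (n + 1) := Nat.one_le_iff_ne_zero.2 (by positivity)
      omega⟩
    obtain ⟨k, hk⟩ := h2
    rw [h1, hk, nfold_add, ← hk, ih]
    show _ = nfoldAdd (m + 2) (nfoldAdd (n + 1) x)
    rw [nfold_step]

private lemma two_pow_succ_form (i : ℕ) : ∃ k, 2 ^ i = k + 1 :=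
  ⟨2 ^ i - 1, by have := Nat.one_le_two_pow (n := i); omega⟩

private lemma nfold_pow_comp (i j : ℕ) (x : S) :
    nfoldAdd (2 ^ (i + j)) x = nfoldAdd (2 ^ j) (nfoldAdd (2 ^ i) x) := by
  obtain ⟨ki, hki⟩ := two_pow_succ_form i
  obtain ⟨kj, hkj⟩ := two_pow_succ_form j
  have h : 2 ^ (i + j) = (kj + 1) * (ki + 1) := by
    rw [← hki, ← hkj, pow_add, Nat.mul_comm]
  rw [h, hki, hkj, nfold_comp]

/-- raise the exponent in a δ-witness -/
private lemma delta_raise {i : ℕ} {x y u : S} (h : nfoldAdd (2 ^ i) x = y + u) (k : ℕ) :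
    ∃ u', nfoldAdd (2 ^ (i + k)) x = y + u' := by
  induction k with
  | zero => exact ⟨u, h⟩
  | succ k ih =>
    obtain ⟨u', hu'⟩ := ih
    refine ⟨u' + (y + u'), ?_⟩
    have h3 : nfoldAdd (2 ^ (i + k + 1)) x = nfoldAdd (2 ^ 1) (nfoldAdd (2 ^ (i + k)) x) :=
      nfold_pow_comp (i + k) 1 x
    rw [pow_one] at h3
    show nfoldAdd (2 ^ (i + k + 1)) x = _
    rw [h3, hu', nfold_two]
    ac_rfl

private lemma delta_congruence (hcomm : ∀ x y : S, x * y = y * x) :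
    IsCongruence (deltaRel (S := S)) := by
  obtain ⟨k0, hk0⟩ := two_pow_succ_form 0
  refine ⟨⟨?_, ?_, ?_⟩, ?_, ?_⟩
  · intro x
    exact ⟨1, x, x, by rw [pow_one, nfold_two], by rw [pow_one, nfold_two]⟩
  · rintro x y ⟨i, u, v, h1, h2⟩
    exact ⟨i, v, u, h2, h1⟩
  · -- transitivity
    rintro x y z ⟨i, u, v, h1, h2⟩ ⟨j, s, t, h3, h4⟩
    obtain ⟨ki, hki⟩ := two_pow_succ_form i
    obtain ⟨kj, hkj⟩ := two_pow_succ_form j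
    refine ⟨i + j, nfoldAdd (2 ^ j) u + s, nfoldAdd (2 ^ i) t + v, ?_, ?_⟩
    · rw [nfold_pow_comp i j, h1, hkj, nfold_distrib, ← hkj, h3]
      ac_rfl
    · rw [show i + j = j + i by omega, nfold_pow_comp j i, h4, hki, nfold_distrib, ← hki, h2]
      ac_rfl
  · -- addition
    rintro x x' y y' ⟨i, u, v, h1, h2⟩ ⟨j, s, t, h3, h4⟩
    obtain ⟨u', hu'⟩ := delta_raise h1 j
    obtain ⟨v', hv'⟩ := delta_raise h2 j
    obtain ⟨s', hs'⟩ := delta_raise h3 i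
    obtain ⟨t', ht'⟩ := delta_raise h4 i
    rw [show j + i = i + j by omega] at hs' ht'
    obtain ⟨k, hk⟩ := two_pow_succ_form (i + j)
    refine ⟨i + j, u' + s', v' + t', ?_, ?_⟩
    · rw [hk, nfold_distrib, ← hk, hu', hs']
      ac_rfl
    · rw [hk, nfold_distrib, ← hk, hv', ht']
      ac_rfl
  · -- multiplication
    rintro x x' y y' ⟨i, u, v, h1, h2⟩ ⟨j, s, t, h3, h4⟩
    obtain ⟨ki, hki⟩ := two_pow_succ_form i
    obtain ⟨kj, hkj⟩ := two_pow_succ_form j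
    refine ⟨i + j, x' * s + nfoldAdd (2 ^ j) (u * y), y * v + nfoldAdd (2 ^ i) (t * x'),
      ?_, ?_⟩
    · calc nfoldAdd (2 ^ (i + j)) (x * y)
          = nfoldAdd (2 ^ j) (nfoldAdd (2 ^ i) (x * y)) := nfold_pow_comp i j _
        _ = nfoldAdd (2 ^ j) (nfoldAdd (2 ^ i) x * y) := by rw [hki, nfold_mul_right]
        _ = nfoldAdd (2 ^ j) (x' * y + u * y) := by rw [h1, right_distrib]
        _ = nfoldAdd (2 ^ j) (x' * y) + nfoldAdd (2 ^ j) (u * y) := by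
            rw [hkj, nfold_distrib]
        _ = x' * nfoldAdd (2 ^ j) y + nfoldAdd (2 ^ j) (u * y) := by
            rw [hkj, nfold_mul_left]
        _ = x' * (y' + s) + nfoldAdd (2 ^ j) (u * y) := by rw [h3]
        _ = x' * y' + (x' * s + nfoldAdd (2 ^ j) (u * y)) := by
            rw [left_distrib]; ac_rfl
    · calc nfoldAdd (2 ^ (i + j)) (x' * y')
          = nfoldAdd (2 ^ (j + i)) (x' * y') := by rw [Nat.add_comm i j]
        _ = nfoldAdd (2 ^ i) (nfoldAdd (2 ^ j) (x' * y')) := nfold_pow_comp j i _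
        _ = nfoldAdd (2 ^ i) (nfoldAdd (2 ^ j) y' * x') := by
            rw [hcomm x' y', hkj, nfold_mul_right]
        _ = nfoldAdd (2 ^ i) (y * x' + t * x') := by rw [h4, right_distrib]
        _ = nfoldAdd (2 ^ i) (y * x') + nfoldAdd (2 ^ i) (t * x') := by
            rw [hki, nfold_distrib]
        _ = y * nfoldAdd (2 ^ i) x' + nfoldAdd (2 ^ i) (t * x') := by
            rw [hki, nfold_mul_left]
        _ = y * (x + v) + nfoldAdd (2 ^ i) (t * x') := by rw [h2]
        _ = x * y + (y * v + nfoldAdd (2 ^ i) (t * x')) := by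
            rw [left_distrib, hcomm y x]; ac_rfl

private lemma idem_or_delta (hcomm : ∀ x y : S, x * y = y * x) (hs : CongSimple S) :
    (∀ x : S, x + x = x) ∨ (∀ x y : S, deltaRel x y) := by
  rcases simple_cases hs (delta_congruence hcomm) with hid | hfull
  · left
    intro x
    have : deltaRel x (x + x) := by
      refine ⟨2, x + x, nfoldAdd 7 x, ?_, ?_⟩
      · show nfoldAdd 4 x = (x + x) + (x + x)
        show nfoldAdd 2 x + x + x = _
        rw [nfold_two]; ac_rfl
      · show nfoldAdd 4 (x + x) = x + nfoldAdd 7 x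
        have d : nfoldAdd 4 (x + x) = nfoldAdd 4 x + nfoldAdd 4 x := nfold_distrib 3 x x
        have s1 : nfoldAdd 4 x + nfoldAdd 4 x = nfoldAdd 8 x := (nfold_add 3 3 x).symm
        have s2 : nfoldAdd 8 x = nfoldAdd 1 x + nfoldAdd 7 x := nfold_add 0 6 x
        rw [d, s1, s2, nfold_one]
    exact ((hid x (x + x)).1 this).symm
  · exact Or.inr hfull

end Aux2
section Aux3

private lemma vAdd_self {G : Type*} (x : Option G) : vAdd x x = x := by
  unfold vAdd; simp

private lemma vAdd_ne {G : Type*} {x y : Option G} (h : x ≠ y) : vAdd x y = none := by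
  unfold vAdd
  split
  · exact absurd (by assumption) h
  · rfl

private lemma vAdd_none_left {G : Type*} (y : Option G) : vAdd none y = none := by
  unfold vAdd; split <;> rfl

private lemma vAdd_none_right {G : Type*} (x : Option G) : vAdd x none = none := by
  unfold vAdd
  split
  · assumption
  · rfl

private lemma vMul_none_left {G : Type*} [Mul G] (y : Option G) : vMul none y = none := by
  cases y <;> rfl

private lemma vMul_none_right {G : Type*} [Mul G] (x : Option G) : vMul x none = none := by
  cases x <;> rfl

variable {S : Type u} [PaperSemiring S]

/-- the syntactic congruence of `{w}` -/
private def nuRel (w x y : S) : Prop :=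
  (∀ z u : S, x * z + u = w ↔ y * z + u = w) ∧ (∀ u : S, x + u = w ↔ y + u = w) ∧
    (∀ z : S, x * z = w ↔ y * z = w) ∧ (x = w ↔ y = w)

private lemma nu_congruence (hcomm : ∀ x y : S, x * y = y * x) (w : S) :
    IsCongruence (nuRel w) := by
  refine ⟨⟨?_, ?_, ?_⟩, ?_, ?_⟩
  · exact fun x => ⟨fun z u => Iff.rfl, fun u => Iff.rfl, fun z => Iff.rfl, Iff.rfl⟩
  · rintro x y ⟨h1, h2, h3, h4⟩
    exact ⟨fun z u => (h1 z u).symm, fun u => (h2 u).symm, fun z => (h3 z).symm, h4.symm⟩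
  · rintro x y z ⟨h1, h2, h3, h4⟩ ⟨g1, g2, g3, g4⟩
    exact ⟨fun z' u => (h1 z' u).trans (g1 z' u), fun u => (h2 u).trans (g2 u),
      fun z' => (h3 z').trans (g3 z'), h4.trans g4⟩
  · -- addition
    rintro x x' y y' ⟨h1, h2, h3, h4⟩ ⟨g1, g2, g3, g4⟩
    refine ⟨?_, ?_, ?_, ?_⟩
    · intro z u
      rw [show (x + y) * z + u = x * z + (y * z + u) by rw [right_distrib]; ac_rfl,
        show (x' + y') * z + u = y' * z + (x' * z + u) by rw [right_distrib]; ac_rfl]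
      refine (h1 z (y * z + u)).trans ?_
      rw [show x' * z + (y * z + u) = y * z + (x' * z + u) by ac_rfl]
      exact g1 z (x' * z + u)
    · intro u
      rw [show x + y + u = x + (y + u) by ac_rfl,
        show x' + y' + u = y' + (x' + u) by ac_rfl]
      refine (h2 (y + u)).trans ?_
      rw [show x' + (y + u) = y + (x' + u) by ac_rfl]
      exact g2 (x' + u)
    · intro z
      rw [show (x + y) * z = x * z + y * z from right_distrib x y z,
        show (x' + y') * z = y' * z + x' * z by rw [right_distrib]; ac_rfl]
      refine (h1 z (y * z)).trans ?_
      rw [show x' * z + y * z = y * z + x' * z by ac_rfl]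
      exact g1 z (x' * z)
    · rw [show x + y = x + y from rfl, show x' + y' = y' + x' by ac_rfl]
      refine (h2 y).trans ?_
      rw [show x' + y = y + x' by ac_rfl]
      exact g2 x'
  · -- multiplication
    rintro x x' y y' ⟨h1, h2, h3, h4⟩ ⟨g1, g2, g3, g4⟩
    have e : ∀ p q r : S, p * (q * r) = q * (p * r) := by
      intro p q r
      rw [← mul_assoc, hcomm p q, mul_assoc]
    refine ⟨?_, ?_, ?_, ?_⟩
    · intro z u
      rw [show x * y * z + u = x * (y * z) + u by rw [mul_assoc],
        show x' * y' * z + u = y' * (x' * z) + u by rw [mul_assoc, e]]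
      refine (h1 (y * z) u).trans ?_
      rw [show x' * (y * z) = y * (x' * z) from e x' y z]
      exact g1 (x' * z) u
    · intro u
      rw [show x' * y' + u = y' * x' + u by rw [hcomm]]
      refine (h1 y u).trans ?_
      rw [show x' * y = y * x' from hcomm x' y]
      exact g1 x' u
    · intro z
      rw [show x * y * z = x * (y * z) from mul_assoc x y z,
        show x' * y' * z = y' * (x' * z) by rw [mul_assoc, e]]
      refine (h3 (y * z)).trans ?_
      rw [show x' * (y * z) = y * (x' * z) from e x' y z]
      exact g3 (x' * z)
    · rw [show x' * y' = y' * x' from hcomm x' y']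
      refine (h3 y).trans ?_
      rw [show x' * y = y * x' from hcomm x' y]
      exact g3 x'

private lemma nu_id (hcomm : ∀ x y : S, x * y = y * x) (hs : CongSimple S) (w : S) :
    ∀ x y : S, nuRel w x y → x = y := by
  rcases simple_cases hs (nu_congruence hcomm w) with hid | hfull
  · exact fun x y h => (hid x y).1 h
  · exfalso
    obtain ⟨u, v, huv⟩ := hs.1
    have hx : ∀ x : S, x = w := fun x => ((hfull x w).2.2.2).2 rfl
    exact huv ((hx u).trans (hx v).symm)

end Aux3
section Aux4

variable {S : Type u} [PaperSemiring S]

private lemma branchVG (hcomm : ∀ x y : S, x * y = y * x) (hs : CongSimple S)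
    {w : S} (hw : MulAbsorbing w) (hnil : ∀ x : S, x ≠ w → x * x ≠ w)
    (hbi : ∀ x : S, x + w = w) (hidem : ∀ x : S, x + x = x) : IsoToV S := by
  classical
  have hnzd : ∀ {x y : S}, x ≠ w → y ≠ w → x * y ≠ w := fun hx hy => nzd' hcomm hs hw hnil hx hy
  have hnuid := nu_id hcomm hs w
  -- co-monotonicity of complements
  have hcomono : ∀ a b u : S, a + b = b → a + u = w → b + u = w := by
    intro a b u hab hau
    have h1 : a + (b + u) = b + u := by rw [← add_assoc, hab]
    have h2 : a + (b + u) = w := by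
      calc a + (b + u) = b + (a + u) := by ac_rfl
        _ = b + w := by rw [hau]
        _ = w := hbi b
    exact h1.symm.trans h2
  -- the core contradiction
  have hcore : ∀ a b c : S, a + b = b → a + c = c → b + c = w → b ≠ w → c ≠ w → False := by
    intro a b c hab hac hbc hb hc
    have h1 : a * b + a * c = w := by rw [← left_distrib, hbc, (hw a).1]
    have h3 : a * b + c * b = c * b := by rw [← right_distrib, hac]
    have h2 : a * c + b * c = b * c := by rw [← right_distrib, hab]
    have h4 : b * c + (a * b + a * c) = b * c := by
      calc b * c + (a * b + a * c) = (a * b + c * b) + a * c := by rw [hcomm b c]; ac_rfl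
        _ = c * b + a * c := by rw [h3]
        _ = a * c + b * c := by rw [hcomm c b]; ac_rfl
        _ = b * c := h2
    have h5 : b * c + (a * b + a * c) = w := by rw [h1]; exact hbi _
    exact hnzd hb hc (h4.symm.trans h5)
  -- the additive order is trivial below non-w elements
  have htriv : ∀ a b : S, a + b = b → b ≠ w → a = b := by
    intro a b hab hb
    have ha : a ≠ w := by
      intro heq
      rw [heq] at hab
      have h2 : w + b = w := by rw [add_comm]; exact hbi b
      exact hb (hab.symm.trans h2)
    apply hnuid
    refine ⟨?_, ?_, ?_, ?_⟩
    · intro z u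
      by_cases hz : z = w
      · rw [hz, (hw a).1, (hw b).1]
      · have habz : a * z + b * z = b * z := by rw [← right_distrib, hab]
        constructor
        · exact fun hau => hcomono _ _ _ habz hau
        · intro hbu
          by_contra hau
          refine hcore (a * z) (b * z) (a * z + u) habz ?_ ?_ (hnzd hb hz) hau
          · rw [← add_assoc, hidem]
          · calc b * z + (a * z + u) = a * z + (b * z + u) := by ac_rfl
              _ = a * z + w := by rw [hbu]
              _ = w := hbi _
    · intro u
      constructor
      · exact fun h => hcomono a b u hab h
      · intro hbu
        by_contra hau
        refine hcore a b (a + u) hab ?_ ?_ hb hau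
        · rw [← add_assoc, hidem]
        · calc b + (a + u) = a + (b + u) := by ac_rfl
            _ = a + w := by rw [hbu]
            _ = w := hbi a
    · intro z
      by_cases hz : z = w
      · rw [hz, (hw a).1, (hw b).1]
      · exact iff_of_false (hnzd ha hz) (hnzd hb hz)
    · exact iff_of_false ha hb
  -- sums of distinct non-w elements are w
  have haddw : ∀ x y : S, x ≠ w → y ≠ w → x ≠ y → x + y = w := by
    intro x y hx hy hxy
    by_contra hc
    have h1 : x + (x + y) = x + y := by rw [← add_assoc, hidem]
    have h2 : y + (x + y) = x + y := by
      rw [show y + (x + y) = x + (y + y) by ac_rfl, hidem]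
    exact hxy ((htriv _ _ h1 hc).trans (htriv _ _ h2 hc).symm)
  -- divisibility
  have hdiv : ∀ x : S, x ≠ w → ∀ u : S, u ≠ w → ∃ s : S, x * s = u := by
    intro x hx u hu
    set J : Set S := {t : S | (∃ s, t = x * s) ∨ ∃ s r, t = x * s + r} with hJdef
    have hJ : IsBiIdealSet J := by
      refine ⟨⟨x * x, Or.inl ⟨x, rfl⟩⟩, ?_, ?_⟩
      · rintro s a (⟨p, rfl⟩ | ⟨p, r, rfl⟩)
        · exact Or.inr ⟨p, s, by rw [add_comm]⟩
        · exact Or.inr ⟨p, r + s, by ac_rfl⟩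
      · rintro s a (⟨p, rfl⟩ | ⟨p, r, rfl⟩)
        · constructor
          · exact Or.inl ⟨s * p, by rw [← mul_assoc, hcomm s x, mul_assoc]⟩
          · exact Or.inl ⟨p * s, by rw [← mul_assoc]⟩
        · constructor
          · exact Or.inr ⟨s * p, s * r, by
              rw [left_distrib, ← mul_assoc, hcomm s x, mul_assoc]⟩
          · exact Or.inr ⟨p * s, r * s, by rw [right_distrib, ← mul_assoc]⟩
    rcases biideal_cases hs hJ with hsing | huniv
    · exfalso
      have h1 : x * x ∈ J := Or.inl ⟨x, rfl⟩
      have h2 : w ∈ J := Or.inl ⟨w, ((hw x).1).symm⟩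
      exact hnil x hx (hsing _ h1 _ h2)
    · have hu' : u ∈ J := huniv.symm ▸ Set.mem_univ u
      rcases hu' with ⟨s, hus⟩ | ⟨s, r, hur⟩
      · exact ⟨s, hus.symm⟩
      · refine ⟨s, htriv (x * s) u ?_ hu⟩
        rw [hur, ← add_assoc, hidem]
  -- the group structure on S \ {w}
  obtain ⟨t0, ht0⟩ := exists_ne' hs w
  obtain ⟨e, he⟩ := hdiv t0 ht0 t0 ht0
  have hew : e ≠ w := fun h => ht0 (by rw [← he, h, (hw t0).1])
  have hid : ∀ u : S, u ≠ w → u * e = u := by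
    intro u hu
    obtain ⟨s, hsu⟩ := hdiv t0 ht0 u hu
    calc u * e = t0 * s * e := by rw [hsu]
      _ = t0 * e * s := by rw [mul_assoc, hcomm s e, ← mul_assoc]
      _ = t0 * s := by rw [he]
      _ = u := hsu
  have hinvne : ∀ a : {x : S // x ≠ w}, Classical.choose (hdiv a.1 a.2 e hew) ≠ w := by
    intro a h
    have hspec := Classical.choose_spec (hdiv a.1 a.2 e hew)
    rw [h, (hw a.1).1] at hspec
    exact hew hspec.symm
  letI instG : CommGroup {x : S // x ≠ w} :=
    { mul := fun a b => ⟨a.1 * b.1, hnzd a.2 b.2⟩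
      mul_assoc := fun a b c => Subtype.ext (mul_assoc a.1 b.1 c.1)
      one := ⟨e, hew⟩
      one_mul := fun a => Subtype.ext (by
        show e * a.1 = a.1
        rw [hcomm]; exact hid a.1 a.2)
      mul_one := fun a => Subtype.ext (hid a.1 a.2)
      inv := fun a => ⟨Classical.choose (hdiv a.1 a.2 e hew), hinvne a⟩
      inv_mul_cancel := fun a => Subtype.ext (by
        show Classical.choose (hdiv a.1 a.2 e hew) * a.1 = e
        rw [hcomm]
        exact Classical.choose_spec (hdiv a.1 a.2 e hew))
      mul_comm := fun a b => Subtype.ext (hcomm a.1 b.1) }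
  -- the isomorphism
  refine ⟨{x : S // x ≠ w}, instG, ?_⟩
  have hleft : ∀ x : S, Option.elim
      ((if h : x = w then none else some ⟨x, h⟩ : Option {y : S // y ≠ w})) w Subtype.val = x := by
    intro x
    by_cases h : x = w
    · rw [dif_pos h, Option.elim]; exact h.symm
    · rw [dif_neg h, Option.elim]
  have hright : ∀ o : Option {x : S // x ≠ w},
      (if h : Option.elim o w Subtype.val = w then none else some ⟨Option.elim o w Subtype.val, h⟩) = o := by
    rintro (_ | a)
    · rw [Option.elim, dif_pos rfl]
    · rw [Option.elim, dif_neg a.2]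
  refine ⟨⟨fun x => if h : x = w then none else some ⟨x, h⟩,
    fun o => Option.elim o w Subtype.val, hleft, hright⟩, ?_, ?_⟩
  · -- addition
    intro x y
    simp only [Equiv.coe_fn_mk]
    by_cases hx : x = w
    · have hwy : x + y = w := by rw [hx, add_comm]; exact hbi y
      rw [dif_pos hwy, dif_pos hx, vAdd_none_left]
    · by_cases hy : y = w
      · have hxw : x + y = w := by rw [hy]; exact hbi x
        rw [dif_pos hxw, dif_pos hy, vAdd_none_right]
      · by_cases hxy : x = y
        · subst hxy
          have hxx : ¬ (x + x = w) := by rw [hidem]; exact hx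
          rw [dif_neg hxx, dif_neg hx, vAdd_self]
          congr 1
          exact Subtype.ext (hidem x)
        · rw [dif_pos (haddw x y hx hy hxy), dif_neg hx, dif_neg hy,
            vAdd_ne (by simp only [ne_eq, Option.some.injEq, Subtype.mk.injEq]; exact hxy)]
  · -- multiplication
    intro x y
    simp only [Equiv.coe_fn_mk]
    by_cases hx : x = w
    · have h1 : x * y = w := by rw [hx]; exact (hw y).2
      rw [dif_pos h1, dif_pos hx, vMul_none_left]
    · by_cases hy : y = w
      · have h1 : x * y = w := by rw [hy]; exact (hw x).1
        rw [dif_pos h1, dif_pos hy, vMul_none_right]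
      · rw [dif_neg (hnzd hx hy), dif_neg hx, dif_neg hy]
        rfl

end Aux4
section Aux5

variable {S : Type u} [PaperSemiring S]

private lemma nfold_w {w : S} (hww : w + w = w) : ∀ n : ℕ, nfoldAdd (n + 1) w = w := by
  intro n
  induction n with
  | zero => rfl
  | succ n ih =>
    show nfoldAdd (n + 2) w = w
    rw [nfold_step, ih, hww]

private lemma branchT8 (hcomm : ∀ x y : S, x * y = y * x) (hs : CongSimple S)
    {w : S} (hw : MulAbsorbing w) (hnil : ∀ x : S, x ≠ w → x * x ≠ w)
    (hbi : ∀ x : S, x + w = w) (hdf : ∀ x y : S, deltaRel x y) : SIso S T8 := by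
  classical
  have hnzd : ∀ {x y : S}, x ≠ w → y ≠ w → x * y ≠ w := fun hx hy => nzd' hcomm hs hw hnil hx hy
  -- every element becomes w after repeated doubling
  have hpow : ∀ x : S, ∃ i, nfoldAdd (2 ^ i) x = w := by
    intro x
    obtain ⟨i, u, v, h1, h2⟩ := hdf x w
    refine ⟨i, ?_⟩
    rw [h1, add_comm]
    exact hbi u
  -- the bi-ideal N = {t | t + t = w}
  have hN : IsBiIdealSet {t : S | t + t = w} := by
    refine ⟨⟨w, hbi w⟩, ?_, ?_⟩
    · intro s a ha
      show (s + a) + (s + a) = w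
      calc (s + a) + (s + a) = (a + a) + (s + s) := by ac_rfl
        _ = w + (s + s) := by rw [ha]
        _ = (s + s) + w := by rw [add_comm]
        _ = w := hbi _
    · intro s a ha
      constructor
      · show s * a + s * a = w
        rw [← left_distrib, ha, (hw s).1]
      · show a * s + a * s = w
        rw [← right_distrib, ha, (hw s).2]
  have h2x : ∀ x : S, x + x = w := by
    rcases biideal_cases hs hN with hsing | huniv
    · exfalso
      have hww : w ∈ {t : S | t + t = w} := hbi w
      have hallw : ∀ (i : ℕ) (x : S), nfoldAdd (2 ^ i) x = w → x = w := by
        intro i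
        induction i with
        | zero => intro x hx; rw [pow_zero, nfold_one] at hx; exact hx
        | succ i ih =>
          intro x hx
          have hcomp : nfoldAdd (2 ^ (i + 1)) x = nfoldAdd (2 ^ 1) (nfoldAdd (2 ^ i) x) :=
            nfold_pow_comp i 1 x
          rw [pow_one] at hcomp
          rw [hcomp, nfold_two] at hx
          exact ih x (hsing _ hx _ hww)
      obtain ⟨u, v, huv⟩ := hs.1
      obtain ⟨i, hi⟩ := hpow u
      obtain ⟨j, hj⟩ := hpow v
      exact huv ((hallw i u hi).trans (hallw j v hj).symm)
    · intro x
      have : x ∈ {t : S | t + t = w} := huniv.symm ▸ Set.mem_univ x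
      exact this
  -- all sums are w
  have hSS : ∀ p q : S, p + q = w := by
    intro p q
    by_contra hpq
    apply hnil (p + q) hpq
    calc (p + q) * (p + q) = p * (p + q) + q * (p + q) := right_distrib p q (p + q)
      _ = (p * p + p * q) + (q * p + q * q) := by rw [left_distrib, left_distrib]
      _ = p * p + ((p * q + p * q) + q * q) := by rw [hcomm q p]; ac_rfl
      _ = p * p + (w + q * q) := by rw [h2x (p * q)]
      _ = p * p + w := by
          rw [show w + q * q = w by rw [add_comm]; exact hbi (q * q)]
      _ = w := hbi _
  -- w has a unique complement class
  obtain ⟨t0, ht0⟩ := exists_ne' hs w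
  have hr : IsCongruence (fun x y : S => (x ≠ w ∧ y ≠ w) ∨ x = y) := by
    refine ⟨⟨fun _ => Or.inr rfl, ?_, ?_⟩, ?_, ?_⟩
    · rintro x y (⟨h1, h2⟩ | rfl)
      · exact Or.inl ⟨h2, h1⟩
      · exact Or.inr rfl
    · rintro x y z (⟨h1, h2⟩ | rfl) (⟨h3, h4⟩ | rfl)
      · exact Or.inl ⟨h1, h4⟩
      · exact Or.inl ⟨h1, h2⟩
      · exact Or.inl ⟨h3, h4⟩
      · exact Or.inr rfl
    · intro x x' y y' _ _
      exact Or.inr (by rw [hSS, hSS])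
    · rintro x x' y y' (⟨h1, h2⟩ | rfl) (⟨h3, h4⟩ | rfl)
      · exact Or.inl ⟨hnzd h1 h3, hnzd h2 h4⟩
      · by_cases hy : y = w
        · exact Or.inr (by rw [hy, (hw x).1, (hw x').1])
        · exact Or.inl ⟨hnzd h1 hy, hnzd h2 hy⟩
      · by_cases hx : x = w
        · exact Or.inr (by rw [hx, (hw y).2, (hw y').2])
        · exact Or.inl ⟨hnzd hx h3, hnzd hx h4⟩
      · exact Or.inr rfl
  have huniq : ∀ x : S, x ≠ w → x = t0 := by
    rcases simple_cases hs hr with hid | hfull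
    · exact fun x hx => (hid x t0).1 (Or.inl ⟨hx, ht0⟩)
    · exfalso
      rcases hfull w t0 with ⟨h1, _⟩ | h
      · exact h1 rfl
      · exact ht0 h.symm
  -- build the isomorphism with T8
  have hee : t0 * t0 = t0 := huniq _ (hnil t0 ht0)
  refine ⟨⟨fun x => if x = w then T8.a else T8.b,
    fun t => match t with | T8.a => w | T8.b => t0, ?_, ?_⟩, ?_, ?_⟩
  · intro x
    dsimp only
    by_cases hx : x = w
    · rw [if_pos hx]
      exact hx.symm
    · rw [if_neg hx]
      exact (huniq x hx).symm
  · intro t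
    dsimp only
    cases t
    · rw [if_pos rfl]
    · rw [if_neg ht0]
  · intro x y
    simp only [Equiv.coe_fn_mk]
    rw [if_pos (hSS x y)]
    rfl
  · intro x y
    simp only [Equiv.coe_fn_mk]
    by_cases hx : x = w
    · have h1 : x * y = w := by rw [hx]; exact (hw y).2
      by_cases hy : y = w
      · rw [if_pos h1, if_pos hx, if_pos hy]; rfl
      · rw [if_pos h1, if_pos hx, if_neg hy]; rfl
    · by_cases hy : y = w
      · have h1 : x * y = w := by rw [hy]; exact (hw x).1
        rw [if_pos h1, if_neg hx, if_pos hy]; rfl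
      · rw [if_neg (hnzd hx hy), if_neg hx, if_neg hy]; rfl

/-- unique non-w element, for the zero-element branch -/
private lemma two_classes (hcomm : ∀ x y : S, x * y = y * x) (hs : CongSimple S)
    {w : S} (hw : MulAbsorbing w) (hnil : ∀ x : S, x ≠ w → x * x ≠ w)
    (hz : ∀ x : S, x + w = x) (hzsf : ∀ x y : S, x + y = w → x = w) :
    ∃ e : S, e ≠ w ∧ ∀ x : S, x ≠ w → x = e := by
  have hnzd : ∀ {x y : S}, x ≠ w → y ≠ w → x * y ≠ w := fun hx hy => nzd' hcomm hs hw hnil hx hy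
  obtain ⟨t0, ht0⟩ := exists_ne' hs w
  have hr : IsCongruence (fun x y : S => (x = w ∧ y = w) ∨ (x ≠ w ∧ y ≠ w)) := by
    refine ⟨⟨?_, ?_, ?_⟩, ?_, ?_⟩
    · intro x
      by_cases hx : x = w
      · exact Or.inl ⟨hx, hx⟩
      · exact Or.inr ⟨hx, hx⟩
    · rintro x y (⟨h1, h2⟩ | ⟨h1, h2⟩)
      · exact Or.inl ⟨h2, h1⟩
      · exact Or.inr ⟨h2, h1⟩
    · rintro x y z (⟨h1, h2⟩ | ⟨h1, h2⟩) (⟨h3, h4⟩ | ⟨h3, h4⟩)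
      · exact Or.inl ⟨h1, h4⟩
      · exact absurd h2 (by exact h3)
      · exact absurd h3 h2
      · exact Or.inr ⟨h1, h4⟩
    · rintro x x' y y' (⟨h1, h2⟩ | ⟨h1, h2⟩) (⟨h3, h4⟩ | ⟨h3, h4⟩)
      · exact Or.inl ⟨by rw [h1, h3, hz], by rw [h2, h4, hz]⟩
      · refine Or.inr ⟨?_, ?_⟩
        · rw [h1, add_comm, hz]; exact h3
        · rw [h2, add_comm, hz]; exact h4
      · refine Or.inr ⟨?_, ?_⟩
        · rw [h3, hz]; exact h1
        · rw [h4, hz]; exact h2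
      · exact Or.inr ⟨fun h => h1 (hzsf x y h), fun h => h2 (hzsf x' y' h)⟩
    · rintro x x' y y' (⟨h1, h2⟩ | ⟨h1, h2⟩) (⟨h3, h4⟩ | ⟨h3, h4⟩)
      · exact Or.inl ⟨by rw [h1, (hw y).2], by rw [h2, (hw y').2]⟩
      · exact Or.inl ⟨by rw [h1, (hw y).2], by rw [h2, (hw y').2]⟩
      · exact Or.inl ⟨by rw [h3, (hw x).1], by rw [h4, (hw x').1]⟩
      · exact Or.inr ⟨hnzd h1 h3, hnzd h2 h4⟩
  rcases simple_cases hs hr with hid | hfull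
  · refine ⟨t0, ht0, fun x hx => ?_⟩
    rcases (hid x t0).1 (Or.inr ⟨hx, ht0⟩) with h
    exact h
  · exfalso
    rcases hfull w t0 with ⟨_, h2⟩ | ⟨h1, _⟩
    · exact ht0 h2
    · exact h1 rfl

private lemma branchT4 (hcomm : ∀ x y : S, x * y = y * x) (hs : CongSimple S)
    {w : S} (hw : MulAbsorbing w) (hnil : ∀ x : S, x ≠ w → x * x ≠ w)
    (hz : ∀ x : S, x + w = x) (hidem : ∀ x : S, x + x = x) : SIso S T4 := by
  classical
  have hzsf : ∀ x y : S, x + y = w → x = w := by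
    intro x y h
    calc x = x + w := (hz x).symm
      _ = x + (x + y) := by rw [h]
      _ = (x + x) + y := by ac_rfl
      _ = x + y := by rw [hidem]
      _ = w := h
  obtain ⟨e, hew, huniq⟩ := two_classes hcomm hs hw hnil hz hzsf
  have heea : e + e = e := hidem e
  have heem : e * e = e := huniq _ (hnil e hew)
  refine ⟨⟨fun x => if x = w then T4.a else T4.b,
    fun t => match t with | T4.a => w | T4.b => e, ?_, ?_⟩, ?_, ?_⟩
  · intro x
    dsimp only
    by_cases hx : x = w
    · rw [if_pos hx]
      exact hx.symm
    · rw [if_neg hx]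
      exact (huniq x hx).symm
  · intro t
    dsimp only
    cases t
    · rw [if_pos rfl]
    · rw [if_neg hew]
  · intro x y
    simp only [Equiv.coe_fn_mk]
    by_cases hx : x = w
    · by_cases hy : y = w
      · have h1 : x + y = w := by rw [hx, hy, hz]
        rw [if_pos h1, if_pos hx, if_pos hy]; rfl
      · have h1 : x + y = y := by rw [hx, add_comm, hz]
        have h2 : ¬(x + y = w) := by rw [h1]; exact hy
        rw [if_neg h2, if_pos hx, if_neg hy]
        rfl
    · by_cases hy : y = w
      · have h1 : x + y = x := by rw [hy, hz]
        have h2 : ¬(x + y = w) := by rw [h1]; exact hx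
        rw [if_neg h2, if_neg hx, if_pos hy]
        rfl
      · have hxe := huniq x hx
        have hye := huniq y hy
        have h1 : x + y = x := by rw [hxe, hye, hidem]
        have h2 : ¬(x + y = w) := by rw [h1]; exact hx
        rw [if_neg h2, if_neg hx, if_neg hy]
        rfl
  · intro x y
    simp only [Equiv.coe_fn_mk]
    by_cases hx : x = w
    · have h1 : x * y = w := by rw [hx]; exact (hw y).2
      by_cases hy : y = w
      · rw [if_pos h1, if_pos hx, if_pos hy]; rfl
      · rw [if_pos h1, if_pos hx, if_neg hy]; rfl
    · by_cases hy : y = w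
      · have h1 : x * y = w := by rw [hy]; exact (hw x).1
        rw [if_pos h1, if_neg hx, if_pos hy]; rfl
      · have h1 : ¬(x * y = w) := nzd' hcomm hs hw hnil hx hy
        rw [if_neg h1, if_neg hx, if_neg hy]; rfl

private lemma branchField (hcomm : ∀ x y : S, x * y = y * x) (hs : CongSimple S)
    {w : S} (hw : MulAbsorbing w) (hnil : ∀ x : S, x ≠ w → x * x ≠ w)
    (hz : ∀ x : S, x + w = x) (hdf : ∀ x y : S, deltaRel x y) : FieldOps S := by
  have hww : w + w = w := hz w
  -- the ideal of additively invertible elements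
  have hI0 : IsIdealSet {x : S | ∃ y, x + y = w} := by
    refine ⟨⟨w, w, hww⟩, ?_, ?_⟩
    · rintro a ⟨y, hy⟩ b ⟨y', hy'⟩
      refine ⟨y + y', ?_⟩
      calc (a + b) + (y + y') = (a + y) + (b + y') := by ac_rfl
        _ = w + w := by rw [hy, hy']
        _ = w := hww
    · rintro s a ⟨y, hy⟩
      constructor
      · exact ⟨s * y, by rw [← left_distrib, hy, (hw s).1]⟩
      · exact ⟨y * s, by rw [← right_distrib, hy, (hw s).2]⟩
  rcases simple_cases hs (alpha_congruence hcomm hI0) with hid | hfull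
  · -- no invertible elements: leads to a two-element idempotent semiring, impossible under δ
    exfalso
    have hI0w : ∀ a : S, (∃ y : S, a + y = w) → a = w := by
      rintro a ⟨y, hy⟩
      refine (hid a w).1 ⟨y, ⟨a, by rw [add_comm]; exact hy⟩, w, ⟨w, hww⟩, ?_⟩
      rw [hy, hww]
    have hzsf : ∀ x y : S, x + y = w → x = w := fun x y h => hI0w x ⟨y, h⟩
    obtain ⟨e, hew, huniq⟩ := two_classes hcomm hs hw hnil hz hzsf
    obtain ⟨i, u, v, h1, h2⟩ := hdf e w
    obtain ⟨k, hk⟩ := two_pow_succ_form i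
    rw [hk, nfold_w hww] at h2
    exact hew (hzsf e v h2.symm)
  · -- (S,+) is a group: build the field structure
    have hGrp : ∀ x : S, ∃ y, x + y = w := by
      intro x
      obtain ⟨a, _, b, ⟨b', hb'⟩, h⟩ := hfull x w
      refine ⟨a + b', ?_⟩
      have hwb : w + b = b := by rw [add_comm, hz]
      calc x + (a + b') = (x + a) + b' := by ac_rfl
        _ = (w + b) + b' := by rw [h]
        _ = b + b' := by rw [hwb]
        _ = w := hb'
    have hcancel : ∀ u y : S, u + y = u → y = w := by
      intro u y h
      obtain ⟨u', hu'⟩ := hGrp u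
      calc y = y + w := (hz y).symm
        _ = y + (u + u') := by rw [hu']
        _ = (u + y) + u' := by ac_rfl
        _ = u + u' := by rw [h]
        _ = w := hu'
    have hdiv : ∀ a : S, a ≠ w → ∀ u : S, ∃ s, a * s = u := by
      intro a ha u
      have haS : IsIdealSet {t : S | ∃ s, t = a * s} := by
        refine ⟨⟨a * a, a, rfl⟩, ?_, ?_⟩
        · rintro p ⟨s1, rfl⟩ q ⟨s2, rfl⟩
          exact ⟨s1 + s2, by rw [left_distrib]⟩
        · rintro s p ⟨s1, rfl⟩
          exact ⟨⟨s * s1, by rw [← mul_assoc, hcomm s a, mul_assoc]⟩,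
            ⟨s1 * s, by rw [← mul_assoc]⟩⟩
      rcases simple_cases hs (alpha_congruence hcomm haS) with hid' | hfull'
      · exfalso
        have h1 : ∀ x s : S, x = x + a * s := by
          intro x s
          refine (hid' x (x + a * s)).1 ⟨a * s, ⟨s, rfl⟩, a * w, ⟨w, rfl⟩, ?_⟩
          rw [(hw a).1, hz]
        have h2 : a * a = w := hcancel a (a * a) (h1 a a).symm
        exact hnil a ha h2
      · obtain ⟨p, ⟨s1, hp⟩, q, ⟨s2, hq⟩, h⟩ := hfull' u w
        rw [hp, hq] at h
        have h' : u + a * s1 = a * s2 := by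
          rw [h, add_comm, hz]
        obtain ⟨p', hp'⟩ := hGrp s1
        have hinv : a * s1 + a * p' = w := by rw [← left_distrib, hp', (hw a).1]
        refine ⟨s2 + p', ?_⟩
        calc a * (s2 + p') = a * s2 + a * p' := left_distrib a s2 p'
          _ = (u + a * s1) + a * p' := by rw [h']
          _ = u + (a * s1 + a * p') := by ac_rfl
          _ = u + w := by rw [hinv]
          _ = u := hz u
    obtain ⟨a0, ha0⟩ := exists_ne' hs w
    obtain ⟨e, he⟩ := hdiv a0 ha0 a0
    have hident : ∀ b : S, b * e = b := by
      intro b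
      obtain ⟨c, hc⟩ := hdiv a0 ha0 b
      calc b * e = a0 * c * e := by rw [hc]
        _ = a0 * e * c := by rw [mul_assoc, hcomm c e, ← mul_assoc]
        _ = a0 * c := by rw [he]
        _ = b := hc
    have hew : w ≠ e := by
      intro h
      have h1 := hident a0
      rw [← h] at h1
      exact ha0 (h1.symm.trans (hw a0).1)
    exact ⟨w, e, hew, hz, hGrp, fun x => ⟨hident x, by rw [hcomm]; exact hident x⟩,
      hcomm, fun x hx => hdiv x hx e⟩

end Aux5
section Aux6

variable {S : Type u} [PaperSemiring S]

private lemma t4_ab : T4.a ≠ T4.b := fun h => T4.noConfusion h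

private lemma t8_ab : T8.a ≠ T8.b := fun h => T8.noConfusion h

/-- a semiring isomorphic to T4 is not a field -/
private lemma excl_T4_field (h4 : SIso S T4) (hf : FieldOps S) : False := by
  obtain ⟨f, hfa, _⟩ := h4
  obtain ⟨z, e, hne, hidz, hinv, _, _, _⟩ := hf
  have hT4idem : ∀ t : T4, t + t = t := by intro t; cases t <;> rfl
  have hSidem : ∀ x : S, x + x = x := by
    intro x
    apply f.injective
    rw [hfa, hT4idem]
  obtain ⟨y, hy⟩ := hinv e
  have : e = z := by
    calc e = e + z := (hidz e).symm
      _ = e + (e + y) := by rw [hy]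
      _ = (e + e) + y := by ac_rfl
      _ = e + y := by rw [hSidem]
      _ = z := hy
  exact hne this.symm

/-- a semiring isomorphic to T8 is not a field -/
private lemma excl_T8_field (h8 : SIso S T8) (hf : FieldOps S) : False := by
  obtain ⟨f, hfa, _⟩ := h8
  obtain ⟨z, e, hne, hidz, _, _, _, _⟩ := hf
  have hconst : ∀ x y : S, x + y = f.symm T8.a := by
    intro x y
    apply f.injective
    rw [hfa, Equiv.apply_symm_apply]
    rfl
  have h1 : z = f.symm T8.a := by
    have := hconst z z
    rwa [hidz z] at this
  have h2 : e = f.symm T8.a := by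
    have := hconst e z
    rwa [hidz e] at this
  exact hne (h1.trans h2.symm)

/-- a semiring isomorphic to T4 is not isomorphic to any V(G) -/
private lemma excl_T4_V (hcomm : ∀ x y : S, x * y = y * x) (h4 : SIso S T4)
    (hV : IsoToV S) : False := by
  obtain ⟨f, hfa, hfm⟩ := h4
  obtain ⟨G, iG, g, hga, hgm⟩ := hV
  have hgo : g (g.symm none) = none := Equiv.apply_symm_apply g none
  set o := g.symm none with ho
  have hxo : ∀ x : S, x + o = o := by
    intro x
    apply g.injective
    rw [hga, hgo, vAdd_none_right]
  have hxom : ∀ x : S, x * o = o := by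
    intro x
    apply g.injective
    rw [hgm, hgo, vMul_none_right]
  set t := f.symm T4.a with hto
  have hft : f t = T4.a := Equiv.apply_symm_apply f T4.a
  have habs : ∀ x : S, x * t = t := by
    intro x
    apply f.injective
    rw [hfm, hft]
    cases f x <;> rfl
  have hteqo : t = o := by
    have h1 : t * o = o := hxom t
    have h2 : o * t = t := habs o
    rw [← h2, hcomm o t, h1]
  have hneut : ∀ x : S, x + t = x := by
    intro x
    apply f.injective
    rw [hfa, hft]
    cases f x <;> rfl
  set b' := f.symm T4.b with hb'
  have htb' : t ≠ b' := by
    intro h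
    exact t4_ab (f.symm.injective (hto ▸ hb' ▸ h))
  have h3 : b' + t = b' := hneut b'
  have h4' : b' + t = t := by rw [hteqo]; exact hxo b'
  exact htb' (h3.symm.trans h4').symm

/-- a semiring isomorphic to T8 is not isomorphic to any V(G) -/
private lemma excl_T8_V (h8 : SIso S T8) (hV : IsoToV S) : False := by
  obtain ⟨f, hfa, _⟩ := h8
  obtain ⟨G, iG, g, hga, _⟩ := hV
  have hconst : ∀ x y : S, x + y = f.symm T8.a := by
    intro x y
    apply f.injective
    rw [hfa, Equiv.apply_symm_apply]
    rfl
  -- G is nonempty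
  have hne2 : f.symm T8.a ≠ f.symm T8.b := fun h => t8_ab (f.symm.injective h)
  have hgsome : ∃ g0 : G, True := by
    rcases h1 : g (f.symm T8.a) with _ | a
    · rcases h2 : g (f.symm T8.b) with _ | b
      · exact absurd (g.injective (h1.trans h2.symm)) hne2
      · exact ⟨b, trivial⟩
    · exact ⟨a, trivial⟩
  obtain ⟨g0, -⟩ := hgsome
  set x := g.symm (some g0) with hx
  set o := g.symm none with ho
  have hgx : g x = some g0 := Equiv.apply_symm_apply g (some g0)
  have hgo : g o = none := Equiv.apply_symm_apply g none
  have hxx : x + x = x := by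
    apply g.injective
    rw [hga, hgx, vAdd_self]
  have hoo : o + o = o := by
    apply g.injective
    rw [hga, hgo, vAdd_self]
  have hxo : x ≠ o := by
    intro h
    have := hgx.symm.trans ((congrArg g h).trans hgo)
    exact Option.some_ne_none g0 this
  have h1 : x = f.symm T8.a := by
    have := hconst x x
    rwa [hxx] at this
  have h2 : o = f.symm T8.a := by
    have := hconst o o
    rwa [hoo] at this
  exact hxo (h1.trans h2.symm)

/-- a field is not isomorphic to any V(G) -/
private lemma excl_field_V (hf : FieldOps S) (hV : IsoToV S) : False := by
  obtain ⟨z, e, hne, hidz, hinv, _, _, _⟩ := hf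
  obtain ⟨G, iG, g, hga, _⟩ := hV
  set o := g.symm none with ho
  have hgo : g o = none := Equiv.apply_symm_apply g none
  have hxo : ∀ x : S, x + o = o := by
    intro x
    apply g.injective
    rw [hga, hgo, vAdd_none_right]
  obtain ⟨y, hy⟩ := hinv o
  have hzo : z = o := by
    rw [← hy, add_comm]
    exact hxo y
  have heo : e = o := by
    calc e = e + z := (hidz e).symm
      _ = e + o := by rw [hzo]
      _ = o := hxo e
  exact hne (hzo.trans heo.symm)

end Aux6
/-- Let `S` be a commutative congruence-simple semiring with a
multiplicatively absorbing element `w` such that `x² ≠ w` for every `x ≠ w`.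
Then exactly one of the following three cases holds: (1) `S ≅ 𝕋₄` or
`S ≅ 𝕋₈`; (2) `S` is a field; (3) `S ≅ V(G)` for some commutative group
`G`. -/
theorem stmt_19 {S : Type u} [PaperSemiring S]
    (hcomm : ∀ x y : S, x * y = y * x) (hs : CongSimple S) (w : S)
    (hw : MulAbsorbing w) (hnil : ∀ x : S, x ≠ w → x * x ≠ w) :
    (CaseTwoElem S ∧ ¬FieldOps S ∧ ¬IsoToV S) ∨
      (¬CaseTwoElem S ∧ FieldOps S ∧ ¬IsoToV S) ∨
      (¬CaseTwoElem S ∧ ¬FieldOps S ∧ IsoToV S) := by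
  rcases idem_or_delta hcomm hs with hidem | hdf
  · rcases tri1 hcomm hs hw with hbi | hz
    · -- additively idempotent, w bi-absorbing : V(G)
      have hV := branchVG hcomm hs hw hnil hbi hidem
      refine Or.inr (Or.inr ⟨?_, ?_, hV⟩)
      · rintro (h4 | h8)
        · exact excl_T4_V hcomm h4 hV
        · exact excl_T8_V h8 hV
      · exact fun hf => excl_field_V hf hV
    · -- additively idempotent, w a zero : T4
      have h4 := branchT4 hcomm hs hw hnil hz hidem
      refine Or.inl ⟨Or.inl h4, ?_, ?_⟩
      · exact fun hf => excl_T4_field h4 hf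
      · exact fun hV => excl_T4_V hcomm h4 hV
  · rcases tri1 hcomm hs hw with hbi | hz
    · -- δ full, w bi-absorbing : T8
      have h8 := branchT8 hcomm hs hw hnil hbi hdf
      refine Or.inl ⟨Or.inr h8, ?_, ?_⟩
      · exact fun hf => excl_T8_field h8 hf
      · exact fun hV => excl_T8_V h8 hV
    · -- δ full, w a zero : field
      have hf := branchField hcomm hs hw hnil hz hdf
      refine Or.inr (Or.inl ⟨?_, hf, ?_⟩)
      · rintro (h4 | h8)
        · exact excl_T4_field h4 hf
        · exact excl_T8_field h8 hf
      · exact fun hV => excl_field_V hf hV
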